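/- Let k ∈ ℝ with 2|k| = n ∈ ℕ and let u ∈ C_c^∞(𝔻, ℂ). Then the function g(t) = ∫_𝔻 V_k(t,w,0)·u(w) dμ(w) tends to 0 as t → 0⁺. -/

import Mathlib

open MeasureTheory

noncomputable section

/-- `cosh²(d(w,w')/2)` where `d` is the hyperbolic distance on the unit disc `𝔻`. -/
def coshSqDistD (w w' : ℂ) : ℝ :=
  ‖1 - w * (starRingEnd ℂ) w'‖ ^ 2 /
    ((1 - ‖w‖ ^ 2) * (1 - ‖w'‖ ^ 2))

/-- The wave kernel `V_k(t,w,w')` on the hyperbolic disc, in its Chebyshev form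
(valid for `n = 2|k| ∈ ℕ`); `T_n` is the Chebyshev polynomial of the first kind and
the complex power is the principal branch. -/
def Vdisc (k : ℝ) (n : ℕ) (t : ℝ) (w w' : ℂ) : ℂ :=
  if coshSqDistD w w' < Real.cosh (t / 2) ^ 2 then
    ((1 / (2 * Real.pi) : ℝ) : ℂ)
      * ((1 - (starRingEnd ℂ) w * w') / (1 - w * (starRingEnd ℂ) w')) ^ (k : ℂ)
      * (((Real.cosh (t / 2) ^ 2 - coshSqDistD w w') ^ (-(1 / 2 : ℝ)) : ℝ) : ℂ)
      * (((Polynomial.Chebyshev.T ℝ (n : ℤ)).eval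
            (Real.cosh (t / 2) / Real.sqrt (coshSqDistD w w')) : ℝ) : ℂ)
  else 0

/-- The hyperbolic measure `dμ(w) = 4(1−|w|²)^{-2} dA(w)` on the unit disc. -/
def muD : Measure ℂ :=
  (volume.restrict {w : ℂ | ‖w‖ < 1}).withDensity
    (fun w => ENNReal.ofReal (4 / (1 - ‖w‖ ^ 2) ^ 2))

/-- The modified Schrödinger operator with magnetic field `𝒟_k` on the hyperbolic disc,
written in real coordinates `w = u + iv`:
`𝒟_k F = (1/4)(1−u²−v²)²(F_uu + F_vv) + ik(1−u²−v²)(v F_u − u F_v) + (k²(1−u²−v²) + 1/4) F`. -/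
def Dop (k : ℝ) (F : ℂ → ℂ) (w : ℂ) : ℂ :=
  (((1 - ‖w‖ ^ 2) ^ 2 / 4 : ℝ) : ℂ)
      * (fderiv ℝ (fun z => fderiv ℝ F z 1) w 1
          + fderiv ℝ (fun z => fderiv ℝ F z Complex.I) w Complex.I)
    + Complex.I * (k : ℂ) * (((1 - ‖w‖ ^ 2 : ℝ)) : ℂ)
      * ((w.im : ℂ) * fderiv ℝ F w 1 - (w.re : ℂ) * fderiv ℝ F w Complex.I)
    + ((k ^ 2 * (1 - ‖w‖ ^ 2) + 1 / 4 : ℝ) : ℂ) * F w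

end

open Real Set
lemma lintegral_comp_polarCoord_symm_aux (g : ℝ × ℝ → ENNReal) :
    ∫⁻ p in polarCoord.target, ENNReal.ofReal p.1 * g (polarCoord.symm p) = ∫⁻ p, g p := by
  set B : ℝ × ℝ → ℝ × ℝ →L[ℝ] ℝ × ℝ := fun p =>
    LinearMap.toContinuousLinearMap (Matrix.toLin (Module.Basis.finTwoProd ℝ) (Module.Basis.finTwoProd ℝ)
      !![Real.cos p.2, -p.1 * Real.sin p.2; Real.sin p.2, p.1 * Real.cos p.2])
  have A : ∀ p ∈ polarCoord.target, HasFDerivWithinAt polarCoord.symm (B p) polarCoord.target p :=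
    fun p _ => (hasFDerivAt_polarCoord_symm p).hasFDerivWithinAt
  have B_det : ∀ p, (B p).det = p.1 := by
    intro p
    conv_rhs => rw [← one_mul p.1, ← cos_sq_add_sin_sq p.2]
    simp only [B, neg_mul, LinearMap.det_toContinuousLinearMap, LinearMap.det_toLin,
      Matrix.det_fin_two_of, sub_neg_eq_add]
    ring
  have hinj : Set.InjOn polarCoord.symm polarCoord.target := by
    have := polarCoord.symm.injOn
    rwa [OpenPartialHomeomorph.symm_source] at this
  symm
  calc
    ∫⁻ p, g p = ∫⁻ p in polarCoord.source, g p := by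
      rw [← setLIntegral_univ]
      exact setLIntegral_congr polarCoord_source_ae_eq_univ.symm
    _ = ∫⁻ p in polarCoord.symm '' polarCoord.target, g p := by
      rw [polarCoord.symm_image_target_eq_source]
    _ = ∫⁻ p in polarCoord.target, ENNReal.ofReal |(B p).det| * g (polarCoord.symm p) := by
      exact lintegral_image_eq_lintegral_abs_det_fderiv_mul volume
        polarCoord.open_target.measurableSet A hinj g
    _ = ∫⁻ p in polarCoord.target, ENNReal.ofReal p.1 * g (polarCoord.symm p) := by
      refine setLIntegral_congr_fun polarCoord.open_target.measurableSet
        (fun p hp => ?_)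
      rw [B_det, abs_of_pos hp.1]

lemma complex_lintegral_comp_polarCoord_symm_aux (g : ℂ → ENNReal) :
    ∫⁻ p in polarCoord.target, ENNReal.ofReal p.1 * g (Complex.polarCoord.symm p)
      = ∫⁻ w, g w := by
  have h := Complex.volume_preserving_equiv_real_prod.symm
  rw [← h.map_eq, lintegral_map_equiv]
  exact lintegral_comp_polarCoord_symm_aux (fun p => g (Complex.measurableEquivRealProd.symm p))

lemma oneDim_aux {R : ℝ} (hR : 0 < R) :
    ∫⁻ r in Ioo (0:ℝ) R, ENNReal.ofReal ((R - r) ^ (-(1/2):ℝ))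
      = ENNReal.ofReal (2 * R ^ ((1/2):ℝ)) := by
  have hint : IntervalIntegrable (fun x : ℝ => (R - x) ^ (-(1/2):ℝ)) volume 0 R := by
    have h1 : IntervalIntegrable (fun x : ℝ => x ^ (-(1/2):ℝ)) volume 0 R :=
      intervalIntegral.intervalIntegrable_rpow' (by norm_num)
    simpa using (h1.comp_sub_left R).symm
  have hIoo : IntegrableOn (fun x : ℝ => (R - x) ^ (-(1/2):ℝ)) (Ioo 0 R) volume := by
    have := (intervalIntegrable_iff_integrableOn_Ioo_of_le hR.le).mp hint
    exact this
  rw [← ofReal_integral_eq_lintegral_ofReal hIoo]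
  · congr 1
    have : ∫ r in Ioo (0:ℝ) R, (R - r) ^ (-(1/2):ℝ)
        = ∫ r in (0:ℝ)..R, (R - r) ^ (-(1/2):ℝ) := by
      rw [intervalIntegral.integral_of_le hR.le, integral_Ioc_eq_integral_Ioo]
    rw [this, intervalIntegral.integral_comp_sub_left (fun x : ℝ => x ^ (-(1/2):ℝ)) R]
    simp only [sub_self, sub_zero]
    rw [integral_rpow (Or.inl (by norm_num))]
    rw [Real.zero_rpow (by norm_num)]
    ring
  · filter_upwards [ae_restrict_mem measurableSet_Ioo] with x hx
    exact Real.rpow_nonneg (by linarith [hx.2]) _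

lemma radial_aux (φ : ℝ → ENNReal) (hφ : Measurable φ) :
    ∫⁻ w : ℂ, φ (‖w‖)
      = (∫⁻ r in Ioi (0:ℝ), ENNReal.ofReal r * φ r) * ENNReal.ofReal (2 * π) := by
  rw [← complex_lintegral_comp_polarCoord_symm_aux (fun w => φ (‖w‖))]
  have h1 : ∫⁻ p in polarCoord.target,
      ENNReal.ofReal p.1 * φ (‖Complex.polarCoord.symm p‖)
      = ∫⁻ p in polarCoord.target, ENNReal.ofReal p.1 * φ p.1 := by
    refine setLIntegral_congr_fun polarCoord.open_target.measurableSet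
      (fun p hp => ?_)
    rw [Complex.norm_polarCoord_symm, abs_of_pos hp.1]
  rw [h1, polarCoord_target, Measure.volume_eq_prod, ← Measure.prod_restrict]
  have h2 : ∫⁻ p : ℝ × ℝ, ENNReal.ofReal p.1 * φ p.1
        ∂((volume.restrict (Ioi (0:ℝ))).prod (volume.restrict (Ioo (-π) π)))
      = ∫⁻ p : ℝ × ℝ, (fun r => ENNReal.ofReal r * φ r) p.1 * (fun _ : ℝ => (1:ENNReal)) p.2
        ∂((volume.restrict (Ioi (0:ℝ))).prod (volume.restrict (Ioo (-π) π))) := by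
    simp
  have h3 := lintegral_prod_mul (μ := volume.restrict (Ioi (0:ℝ)))
    (ν := volume.restrict (Ioo (-π) π)) (f := fun r => ENNReal.ofReal r * φ r)
    (g := fun _ => (1:ENNReal)) (by fun_prop) aemeasurable_const
  rw [h2, h3]
  congr 1
  simp [Real.volume_Ioo]
  rw [two_mul, ENNReal.ofReal_add pi_pos.le pi_pos.le]

lemma oneDim_main {R A₀ : ℝ} (hR : 0 < R) (hA : 0 ≤ A₀) :
    (∫⁻ r in Ioi (0:ℝ), ENNReal.ofReal r *
        (if r < R then ENNReal.ofReal (A₀ * (R^2 - r^2) ^ (-(1/2):ℝ)) else 0))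
      ≤ ENNReal.ofReal (2 * A₀ * R) := by
  have hRR : R ^ ((1/2):ℝ) * R ^ ((1/2):ℝ) = R := by
    rw [← Real.rpow_add hR]; norm_num
  have step1 : (∫⁻ r in Ioi (0:ℝ), ENNReal.ofReal r *
        (if r < R then ENNReal.ofReal (A₀ * (R^2 - r^2) ^ (-(1/2):ℝ)) else 0))
      = ∫⁻ r in Ioo (0:ℝ) R,
          ENNReal.ofReal r * ENNReal.ofReal (A₀ * (R^2 - r^2) ^ (-(1/2):ℝ)) := by
    have hfun : (fun r : ℝ => ENNReal.ofReal r *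
          (if r < R then ENNReal.ofReal (A₀ * (R^2 - r^2) ^ (-(1/2):ℝ)) else 0))
        = fun r : ℝ => (Iio R).indicator
            (fun r => ENNReal.ofReal r * ENNReal.ofReal (A₀ * (R^2 - r^2) ^ (-(1/2):ℝ))) r := by
      funext r
      by_cases h : r < R
      · simp [Set.indicator_of_mem, h]
      · simp [Set.indicator_of_notMem, h]
    rw [hfun, lintegral_indicator measurableSet_Iio, Measure.restrict_restrict measurableSet_Iio,
      Set.Iio_inter_Ioi]
  rw [step1]
  have step2 : ∫⁻ r in Ioo (0:ℝ) R,
        ENNReal.ofReal r * ENNReal.ofReal (A₀ * (R^2 - r^2) ^ (-(1/2):ℝ))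
      ≤ ∫⁻ r in Ioo (0:ℝ) R,
          ENNReal.ofReal (A₀ * R ^ ((1/2):ℝ)) * ENNReal.ofReal ((R - r) ^ (-(1/2):ℝ)) := by
    refine lintegral_mono_ae ?_
    filter_upwards [ae_restrict_mem measurableSet_Ioo] with r hr
    rw [← ENNReal.ofReal_mul hr.1.le, ← ENNReal.ofReal_mul (by positivity)]
    apply ENNReal.ofReal_le_ofReal
    have hcore : r * (R^2 - r^2) ^ (-(1/2):ℝ) ≤ R ^ ((1/2):ℝ) * (R - r) ^ (-(1/2):ℝ) := by
      have hfact : R^2 - r^2 = (R - r) * (R + r) := by ring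
      have hRr : (0:ℝ) < R - r := by linarith [hr.2]
      have hRr' : (0:ℝ) < R + r := by linarith [hr.1]
      rw [hfact, Real.mul_rpow hRr.le hRr'.le]
      have key : r * (R + r) ^ (-(1/2):ℝ) ≤ R ^ ((1/2):ℝ) := by
        rw [Real.rpow_neg hRr'.le]
        rw [mul_inv_le_iff₀' (by positivity)]
        have h1 : R ^ ((1/2):ℝ) * (R + r) ^ ((1/2):ℝ) = (R * (R + r)) ^ ((1/2):ℝ) :=
          (Real.mul_rpow hR.le hRr'.le).symm
        have h2 : r = (r^2) ^ ((1/2):ℝ) := by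
          rw [← Real.rpow_natCast r 2, ← Real.rpow_mul hr.1.le]
          norm_num
        rw [mul_comm ((R + r) ^ ((1/2):ℝ)) (R ^ ((1/2):ℝ)), h1, h2]
        apply Real.rpow_le_rpow (by positivity) _ (by norm_num)
        nlinarith [hr.1, hr.2]
      calc r * ((R - r) ^ (-(1/2):ℝ) * (R + r) ^ (-(1/2):ℝ))
          = (r * (R + r) ^ (-(1/2):ℝ)) * (R - r) ^ (-(1/2):ℝ) := by ring
        _ ≤ R ^ ((1/2):ℝ) * (R - r) ^ (-(1/2):ℝ) :=
            mul_le_mul_of_nonneg_right key (Real.rpow_nonneg hRr.le _)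
    calc r * (A₀ * (R^2 - r^2) ^ (-(1/2):ℝ)) = A₀ * (r * (R^2 - r^2) ^ (-(1/2):ℝ)) := by ring
      _ ≤ A₀ * (R ^ ((1/2):ℝ) * (R - r) ^ (-(1/2):ℝ)) := mul_le_mul_of_nonneg_left hcore hA
      _ = A₀ * R ^ ((1/2):ℝ) * (R - r) ^ (-(1/2):ℝ) := by ring
  refine le_trans step2 ?_
  rw [lintegral_const_mul' _ _ ENNReal.ofReal_ne_top, oneDim_aux hR,
    ← ENNReal.ofReal_mul (by positivity)]
  apply ENNReal.ofReal_le_ofReal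
  refine le_of_eq ?_
  linear_combination (2*A₀) * hRR


set_option maxHeartbeats 2000000 in
lemma stmt5_aux (k : ℝ) (n : ℕ) (u : ℂ → ℂ)
    (hsupp : tsupport u ⊆ {w : ℂ | ‖w‖ < 1})
    (t C R A₀ K M : ℝ)
    (hM : ∀ x, ‖u x‖ ≤ M) (hM0 : 0 ≤ M)
    (hK : ∀ y ∈ Set.Icc (0:ℝ) 2, ‖(Polynomial.Chebyshev.T ℝ (n : ℤ)).eval y‖ ≤ K)
    (hK0 : 0 ≤ K)
    (hCdef : C = Real.cosh (t/2)^2) (hC1 : 1 < C) (hcosh2 : Real.cosh (t/2) ≤ 2)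
    (hR0 : 0 < R) (hR2 : R^2 = 1 - 1/C) (hA₀def : A₀ = 2*C^2*K*M/Real.pi) :
    ‖∫ w, Vdisc k n t w 0 * u w ∂muD‖ ≤ 2*A₀*R*(2*Real.pi) := by
  have hπ := Real.pi_pos
  have hC0 : (0:ℝ) < C := lt_trans one_pos hC1
  have hA₀ : 0 ≤ A₀ := by rw [hA₀def]; positivity
  set φ : ℝ → ENNReal := fun r =>
    if r < R then ENNReal.ofReal (A₀ * (R^2 - r^2) ^ (-(1/2):ℝ)) else 0 with hφdef
  have hφm : Measurable φ := by
    apply Measurable.ite measurableSet_Iio _ measurable_const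
    fun_prop
  have hρm : Measurable (fun w : ℂ => ENNReal.ofReal (4 / (1 - ‖w‖ ^ 2) ^ 2)) :=
    (measurable_const.div
      ((measurable_const.sub (continuous_norm.measurable.pow_const 2)).pow_const 2)).ennreal_ofReal
  -- pointwise bound
  have hpt : ∀ w : ℂ, ENNReal.ofReal (4 / (1 - ‖w‖ ^ 2) ^ 2) *
      ENNReal.ofReal ‖Vdisc k n t w 0 * u w‖ ≤ φ (‖w‖) := by
    intro w
    by_cases hw : ‖w‖ < 1
    · have hc : coshSqDistD w 0 = 1/(1 - ‖w‖^2) := by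
        simp [coshSqDistD]
      by_cases hlt : coshSqDistD w 0 < Real.cosh (t/2)^2
      · have hr0 : 0 ≤ ‖w‖ := norm_nonneg w
        generalize hrdef : ‖w‖ = r at *
        have hr2 : 0 < 1 - r^2 := by nlinarith
        have hClt : 1/(1-r^2) < C := by rw [hCdef, ← hc]; exact hlt
        have hr2C : 1 < C * (1-r^2) := by
          rw [div_lt_iff₀ hr2] at hClt; linarith
        have h1C : 1/C < 1 - r^2 := by
          rw [div_lt_iff₀ hC0]; linarith
        have hrR2 : r^2 < R^2 := by rw [hR2]; linarith
        have hrR : r < R := by nlinarith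
        have hXpos : (0:ℝ) < R^2 - r^2 := by linarith
        have hCc : R^2 - r^2 ≤ C - 1/(1-r^2) := by
          have e1 : C - 1/(1-r^2) = (C*(1-r^2) - 1)/(1-r^2) := by field_simp
          have e2 : C*(1-r^2) - 1 ≤ (C*(1-r^2) - 1)/(1-r^2) :=
            le_div_self (by linarith) hr2 (by nlinarith [sq_nonneg r])
          have e3 : R^2 - r^2 ≤ C*(1-r^2) - 1 := by
            rw [hR2]
            nlinarith [mul_pos (sub_pos.mpr hC1) (sub_pos.mpr h1C),
              mul_one_div_cancel (ne_of_gt hC0)]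
          linarith [e1 ▸ e2]
        have hX : (C - 1/(1-r^2)) ^ (-(1/2):ℝ) ≤ (R^2 - r^2) ^ (-(1/2):ℝ) :=
          Real.rpow_le_rpow_of_nonpos hXpos hCc (by norm_num)
        have hXnn : (0:ℝ) ≤ (C - 1/(1-r^2)) ^ (-(1/2):ℝ) :=
          Real.rpow_nonneg (by linarith) _
        have hT : |(Polynomial.Chebyshev.T ℝ (n : ℤ)).eval
            (Real.cosh (t/2) / Real.sqrt (1/(1-r^2)))| ≤ K := by
          rw [← Real.norm_eq_abs]
          apply hK
          constructor
          · positivity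
          · have hs1 : 1 ≤ Real.sqrt (1/(1-r^2)) := by
              rw [Real.one_le_sqrt]
              rw [le_div_iff₀ hr2]; nlinarith [sq_nonneg r]
            calc Real.cosh (t/2) / Real.sqrt (1/(1-r^2)) ≤ Real.cosh (t/2) :=
                  div_le_self (le_of_lt (Real.cosh_pos _)) hs1
              _ ≤ 2 := hcosh2
        have hφr : φ r = ENNReal.ofReal (A₀ * (R^2 - r^2) ^ (-(1/2):ℝ)) := if_pos hrR
        rw [hφr, Vdisc, if_pos hlt, hc]
        have hbase : ((1 - (starRingEnd ℂ) w * 0) / (1 - w * (starRingEnd ℂ) 0)) ^ (k:ℂ)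
            = 1 := by simp [Complex.one_cpow]
        rw [hbase, mul_one]
        rw [← ENNReal.ofReal_mul (by positivity)]
        apply ENNReal.ofReal_le_ofReal
        rw [norm_mul, norm_mul, norm_mul, Complex.norm_real, Complex.norm_real,
          Complex.norm_real]
        simp only [Real.norm_eq_abs]
        rw [abs_of_pos (by positivity : (0:ℝ) < 1/(2*Real.pi)), abs_of_nonneg (hCdef ▸ hXnn)]
        have hρ : 4/(1-r^2)^2 ≤ 4*C^2 := by
          have h' : (1/(1-r^2))^2 ≤ C^2 := by
            apply pow_le_pow_left₀ (by positivity) hClt.le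
          calc 4/(1-r^2)^2 = 4*(1/(1-r^2))^2 := by rw [div_pow]; ring
            _ ≤ 4*C^2 := by linarith
        calc 4/(1-r^2)^2 * (1/(2*Real.pi) * (Real.cosh (t/2)^2 - 1/(1-r^2)) ^ (-(1/2):ℝ) *
              |(Polynomial.Chebyshev.T ℝ (n : ℤ)).eval
                (Real.cosh (t/2) / Real.sqrt (1/(1-r^2)))| * ‖u w‖)
            ≤ 4*C^2 * (1/(2*Real.pi) * (R^2 - r^2) ^ (-(1/2):ℝ) * K * M) := by
              apply mul_le_mul hρ _
                (mul_nonneg (mul_nonneg (mul_nonneg (by positivity) (hCdef ▸ hXnn))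
                  (abs_nonneg _)) (norm_nonneg _)) (by positivity)
              apply mul_le_mul _ (hM w) (norm_nonneg _) (by positivity)
              apply mul_le_mul _ hT (abs_nonneg _) (by positivity)
              apply mul_le_mul_of_nonneg_left _ (by positivity : (0:ℝ) ≤ 1/(2*Real.pi))
              rw [← hCdef]; exact hX
          _ = A₀ * (R^2 - r^2) ^ (-(1/2):ℝ) := by
              rw [hA₀def]
              field_simp
              ring
      · rw [Vdisc, if_neg hlt]
        simp [hφdef]
    · have hu0 : u w = 0 :=
        image_eq_zero_of_notMem_tsupport (fun hmem => hw (hsupp hmem))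
      simp [hu0, hφdef]
  -- assembly
  calc ‖∫ w, Vdisc k n t w 0 * u w ∂muD‖
      ≤ (∫⁻ w, ENNReal.ofReal ‖Vdisc k n t w 0 * u w‖ ∂muD).toReal :=
        norm_integral_le_lintegral_norm _
    _ ≤ 2*A₀*R*(2*Real.pi) := by
        apply ENNReal.toReal_le_of_le_ofReal (by positivity)
        rw [muD, lintegral_withDensity_eq_lintegral_mul_non_measurable _ hρm
          (Filter.Eventually.of_forall fun w => ENNReal.ofReal_lt_top)]
        calc ∫⁻ w in {w : ℂ | ‖w‖ < 1},
              (((fun w => ENNReal.ofReal (4 / (1 - ‖w‖ ^ 2) ^ 2)) *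
                (fun w => ENNReal.ofReal ‖Vdisc k n t w 0 * u w‖) : ℂ → ENNReal)) w ∂volume
            ≤ ∫⁻ w in {w : ℂ | ‖w‖ < 1}, φ (‖w‖) ∂volume :=
              lintegral_mono (fun w => hpt w)
          _ ≤ ∫⁻ w, φ (‖w‖) ∂volume :=
              lintegral_mono' Measure.restrict_le_self le_rfl
          _ = (∫⁻ r in Ioi (0:ℝ), ENNReal.ofReal r * φ r) * ENNReal.ofReal (2 * Real.pi) :=
              radial_aux φ hφm
          _ ≤ ENNReal.ofReal (2 * A₀ * R) * ENNReal.ofReal (2 * Real.pi) :=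
              mul_le_mul' (oneDim_main hR0 hA₀) le_rfl
          _ = ENNReal.ofReal (2 * A₀ * R * (2 * Real.pi)) :=
              (ENNReal.ofReal_mul (by positivity)).symm


/-- (Lemma 2.4 i)). For `k ∈ ℝ` with `2|k| = n ∈ ℕ` and
`u ∈ C_c^∞(𝔻, ℂ)`, the function `g(t) = ∫_𝔻 V_k(t,w,0) u(w) dμ(w)` tends to `0`
as `t → 0⁺`. -/
theorem stmt5 (k : ℝ) (n : ℕ) (hk : 2 * |k| = (n : ℝ)) (u : ℂ → ℂ)
    (hu : ContDiff ℝ (⊤ : ℕ∞) u) (hcomp : HasCompactSupport u)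
    (hsupp : tsupport u ⊆ {w : ℂ | ‖w‖ < 1}) :
    Filter.Tendsto (fun t : ℝ => ∫ w, Vdisc k n t w 0 * u w ∂muD)
      (nhdsWithin 0 (Set.Ioi 0)) (nhds 0) := by
  obtain ⟨M, hM⟩ := hcomp.exists_bound_of_continuous hu.continuous
  have hM0 : 0 ≤ M := le_trans (norm_nonneg _) (hM 0)
  obtain ⟨K, hK⟩ := (isCompact_Icc : IsCompact (Set.Icc (0:ℝ) 2)).exists_bound_of_continuousOn
    (Polynomial.Chebyshev.T ℝ (n : ℤ)).continuous.continuousOn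
  have hK0 : 0 ≤ K := le_trans (norm_nonneg _) (hK 0 ⟨le_refl 0, by norm_num⟩)
  have hbne : Filter.Tendsto
      (fun t : ℝ => 2 * (2*(Real.cosh (t/2)^2)^2*K*M/Real.pi) *
        Real.sqrt (1 - 1/(Real.cosh (t/2)^2)) * (2*Real.pi))
      (nhdsWithin 0 (Set.Ioi 0)) (nhds 0) := by
    have h1 : Continuous fun t : ℝ => Real.cosh (t/2) :=
      Real.continuous_cosh.comp (continuous_id.div_const 2)
    have hcont : ContinuousAt (fun t : ℝ => 2 * (2*(Real.cosh (t/2)^2)^2*K*M/Real.pi) *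
        Real.sqrt (1 - 1/(Real.cosh (t/2)^2)) * (2*Real.pi)) 0 := by
      have h2 : ContinuousAt (fun t : ℝ => 1 - 1/(Real.cosh (t/2)^2)) 0 := by
        apply ContinuousAt.sub continuousAt_const
        apply ContinuousAt.div continuousAt_const ((h1.pow 2).continuousAt)
        simp [Real.cosh_zero]
      exact ((continuousAt_const.mul
        ((((((h1.pow 2).pow 2).continuousAt.const_mul 2).mul continuousAt_const).mul
          continuousAt_const).div_const Real.pi)).mul
        (Real.continuous_sqrt.continuousAt.comp h2)).mul continuousAt_const
    have h := hcont.tendsto.mono_left (nhdsWithin_le_nhds (s := Set.Ioi (0:ℝ)))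
    norm_num at h
    convert h using 2
    norm_num
  rw [tendsto_zero_iff_norm_tendsto_zero]
  apply squeeze_zero' (Filter.Eventually.of_forall fun t => norm_nonneg _) _ hbne
  filter_upwards [Ioc_mem_nhdsGT_of_mem (Set.left_mem_Ico.mpr one_pos)] with t ht
  have hcosh1 : 1 < Real.cosh (t/2) := Real.one_lt_cosh.mpr (ne_of_gt (half_pos ht.1))
  have hC1 : 1 < Real.cosh (t/2)^2 := one_lt_pow₀ hcosh1 two_ne_zero
  have hcosh2 : Real.cosh (t/2) ≤ 2 := by
    have h1 : Real.cosh (t/2) ≤ Real.cosh (1/2) := by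
      rw [Real.cosh_le_cosh]
      rw [abs_of_nonneg (by linarith [ht.1] : (0:ℝ) ≤ t/2),
        abs_of_nonneg (by norm_num : (0:ℝ) ≤ (1:ℝ)/2)]
      linarith [ht.2]
    have he : Real.exp (1/2 : ℝ) ≤ 2 := by
      nlinarith [Real.exp_one_lt_d9, Real.exp_add (1/2 : ℝ) (1/2 : ℝ), Real.exp_pos (1/2 : ℝ)]
    have he2 : Real.exp (-(1/2) : ℝ) ≤ 1 := Real.exp_le_one_iff.mpr (by norm_num)
    have h2 : Real.cosh (1/2 : ℝ) ≤ 2 := by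
      rw [Real.cosh_eq]
      linarith
    linarith
  have hS0 : 0 < 1 - 1/(Real.cosh (t/2)^2) := by
    have h : 1/(Real.cosh (t/2)^2) < 1 := (div_lt_one (by positivity)).mpr hC1
    linarith
  exact stmt5_aux k n u hsupp t _ _ _ K M hM hM0 hK hK0 rfl hC1 hcosh2
    (Real.sqrt_pos.mpr hS0) (Real.sq_sqrt hS0.le) rfl
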